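/- arXiv:1809.11012 — 2 statements merged into one kernel-verified Lean document; each statement's English description precedes it below -/
import Mathlib

section
/- Let κ > 0 and let u : [0,∞) → ℝ be continuously differentiable such that for every k ∈ ℕ the functions t ↦ e^{−κt} t^k u(t) and t ↦ e^{−κt} t^k u'(t) are integrable on (0,∞) and e^{−κt} t^k u(t) → 0 as t → ∞. Then for every n ∈ ℕ, ∫_0^∞ e^{−κt} L_n(κt) u'(t) dt = κ ∑_{m=0}^{n} u_m − u(0), where u_m = ∫_0^∞ e^{−κt} L_m(κt) u(t) dt. -/
open Real Filter MeasureTheory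


/-- Laguerre polynomial L_n(x) = ∑_{k=0}^n (−1)^k (n choose k) x^k / k! -/
noncomputable def lagPoly (n : ℕ) (x : ℝ) : ℝ :=
  ∑ k ∈ Finset.range (n + 1), (-1 : ℝ) ^ k * (n.choose k : ℝ) * x ^ k / (k.factorial : ℝ)

/-!
Integrate by parts against the weight `w t = e^{-κt} L_n(κt)`. The identity
`L_n' = -(L_0 + ⋯ + L_{n-1})` gives `w' t = -κ e^{-κt} (L_0 + ⋯ + L_n)(κt)`, and the boundary
terms are `w 0 u 0 = u 0` and `0` at infinity.
-/

open Finset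

theorem hasDerivAt_sum_mul_pow_div_factorial (c : ℕ → ℝ) (n : ℕ) (x : ℝ) :
    HasDerivAt (fun y => ∑ k ∈ range (n + 1), c k * y ^ k / (k.factorial : ℝ))
      (∑ k ∈ range n, c (k + 1) * x ^ k / (k.factorial : ℝ)) x := by
  have hterm : ∀ k ∈ range (n + 1), HasDerivAt (fun y => c k * y ^ k / (k.factorial : ℝ))
      (c k * (k * x ^ (k - 1)) / (k.factorial : ℝ)) x :=
    fun k _ => ((hasDerivAt_pow k x).const_mul (c k)).div_const _
  refine (HasDerivAt.fun_sum hterm).congr_deriv ?_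
  rw [sum_range_succ']
  simp only [CharP.cast_eq_zero, zero_mul, mul_zero, zero_div, add_zero, Nat.add_sub_cancel]
  refine sum_congr rfl fun k _ => ?_
  rw [Nat.factorial_succ]
  push_cast
  field_simp

theorem sum_range_neg_one_pow_mul_choose_succ (n : ℕ) (x : ℝ) :
    ∑ k ∈ range n, (-1 : ℝ) ^ (k + 1) * (n.choose (k + 1) : ℝ) * x ^ k / (k.factorial : ℝ)
      = -∑ m ∈ range n, lagPoly m x := by
  induction n with
  | zero => simp
  | succ n ih =>
    have hext :
        ∑ k ∈ range n, (-1 : ℝ) ^ (k + 1) * (n.choose (k + 1) : ℝ) * x ^ k / k.factorial =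
          ∑ k ∈ range (n + 1),
            (-1 : ℝ) ^ (k + 1) * (n.choose (k + 1) : ℝ) * x ^ k / k.factorial := by
      simp [sum_range_succ _ n]
    rw [sum_range_succ (fun m => lagPoly m x), neg_add, ← ih, hext, lagPoly, ← sum_neg_distrib,
      ← sum_add_distrib]
    refine sum_congr rfl fun k _ => ?_
    rw [Nat.choose_succ_succ', Nat.cast_add]
    ring

theorem hasDerivAt_lagPoly (n : ℕ) (x : ℝ) :
    HasDerivAt (lagPoly n) (-∑ m ∈ range n, lagPoly m x) x := by
  rw [← sum_range_neg_one_pow_mul_choose_succ]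
  exact hasDerivAt_sum_mul_pow_div_factorial (fun k => (-1 : ℝ) ^ k * n.choose k) n x

theorem lagPoly_zero_right (n : ℕ) : lagPoly n 0 = 1 := by
  rw [lagPoly, sum_eq_single 0 (fun k _ hk => by simp [zero_pow hk]) (by simp)]
  simp

theorem hasDerivAt_exp_mul_lagPoly (κ : ℝ) (n : ℕ) (t : ℝ) :
    HasDerivAt (fun s => exp (-κ * s) * lagPoly n (κ * s))
      (-κ * ∑ m ∈ range (n + 1), exp (-κ * t) * lagPoly m (κ * t)) t := by
  have hexp : HasDerivAt (fun s => exp (-κ * s)) (exp (-κ * t) * -κ) t := by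
    simpa using ((hasDerivAt_id t).const_mul (-κ)).exp
  have hlag : HasDerivAt (fun s => lagPoly n (κ * s))
      ((-∑ m ∈ range n, lagPoly m (κ * t)) * κ) t :=
    (hasDerivAt_lagPoly n (κ * t)).comp t (by simpa using (hasDerivAt_id t).const_mul κ)
  refine (hexp.mul hlag).congr_deriv ?_
  rw [← mul_sum, sum_range_succ]
  ring

section Moments

variable {μ : Measure ℝ} (κ : ℝ) (m : ℕ) (v : ℝ → ℝ)

theorem exp_mul_lagPoly_mul_eq_sum (t : ℝ) :
    exp (-κ * t) * lagPoly m (κ * t) * v t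
      = ∑ k ∈ range (m + 1), (-1 : ℝ) ^ k * m.choose k * κ ^ k / k.factorial
          * (exp (-κ * t) * t ^ k * v t) := by
  rw [lagPoly, mul_sum, sum_mul]
  refine sum_congr rfl fun k _ => ?_
  rw [mul_pow]
  ring

theorem integrable_exp_mul_lagPoly_mul
    (hv : ∀ k : ℕ, Integrable (fun t => exp (-κ * t) * t ^ k * v t) μ) :
    Integrable (fun t => exp (-κ * t) * lagPoly m (κ * t) * v t) μ := by
  simp_rw [exp_mul_lagPoly_mul_eq_sum]
  exact integrable_finsetSum _ fun k _ => (hv k).const_mul _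

theorem tendsto_exp_mul_lagPoly_mul {l : Filter ℝ}
    (hv : ∀ k : ℕ, Tendsto (fun t => exp (-κ * t) * t ^ k * v t) l (nhds 0)) :
    Tendsto (fun t => exp (-κ * t) * lagPoly m (κ * t) * v t) l (nhds 0) := by
  simp_rw [exp_mul_lagPoly_mul_eq_sum]
  simpa using tendsto_finsetSum _ fun k _ => (hv k).const_mul
    ((-1 : ℝ) ^ k * m.choose k * κ ^ k / k.factorial)

end Moments

theorem laguerre_transform_deriv_general (κ : ℝ) (u u' : ℝ → ℝ)
    (hderiv : ∀ t ∈ Set.Ici (0 : ℝ), HasDerivWithinAt u (u' t) (Set.Ici 0) t)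
    (hint : ∀ k : ℕ, IntegrableOn (fun t => Real.exp (-κ * t) * t ^ k * u t) (Set.Ioi 0))
    (hint' : ∀ k : ℕ, IntegrableOn (fun t => Real.exp (-κ * t) * t ^ k * u' t) (Set.Ioi 0))
    (hlim : ∀ k : ℕ, Tendsto (fun t => Real.exp (-κ * t) * t ^ k * u t) atTop (nhds 0))
    (n : ℕ) :
    (∫ t in Set.Ioi (0 : ℝ), Real.exp (-κ * t) * lagPoly n (κ * t) * u' t)
      = κ * (∑ m ∈ Finset.range (n + 1),
          ∫ t in Set.Ioi (0 : ℝ), Real.exp (-κ * t) * lagPoly m (κ * t) * u t) - u 0 := by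
  set w : ℝ → ℝ := fun t => exp (-κ * t) * lagPoly n (κ * t)
  set w' : ℝ → ℝ := fun t => -κ * ∑ m ∈ range (n + 1), exp (-κ * t) * lagPoly m (κ * t)
  have hw'u : w' * u =
      fun t => -κ * ∑ m ∈ range (n + 1), exp (-κ * t) * lagPoly m (κ * t) * u t := by
    ext t
    simp only [w', Pi.mul_apply, mul_assoc, sum_mul]
  have hint_m : ∀ m : ℕ,
      IntegrableOn (fun t => exp (-κ * t) * lagPoly m (κ * t) * u t) (Set.Ioi 0) :=
    fun m => integrable_exp_mul_lagPoly_mul κ m u hint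
  have hwu_zero : Tendsto (w * u) (nhdsWithin 0 (Set.Ioi 0)) (nhds (u 0)) := by
    have hw : Continuous w :=
      continuous_iff_continuousAt.2 fun t => (hasDerivAt_exp_mul_lagPoly κ n t).continuousAt
    have hu : ContinuousWithinAt u (Set.Ici 0) 0 := (hderiv 0 Set.self_mem_Ici).continuousWithinAt
    simpa [w, lagPoly_zero_right] using
      ((hw.continuousWithinAt.mul hu).mono Set.Ioi_subset_Ici_self).tendsto
  have hparts := integral_Ioi_mul_deriv_eq_deriv_mul (fun t _ => hasDerivAt_exp_mul_lagPoly κ n t)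
    (fun t ht => (hderiv t (Set.mem_Ici.2 ht.le)).hasDerivAt (Ici_mem_nhds ht))
    (integrable_exp_mul_lagPoly_mul κ n u' hint')
    (by rw [hw'u]; exact (integrable_finsetSum _ fun m _ => hint_m m).const_mul _)
    hwu_zero (tendsto_exp_mul_lagPoly_mul κ n u hlim)
  rw [hparts, show (∫ t in Set.Ioi 0, w' t * u t) = ∫ t in Set.Ioi 0, (w' * u) t from rfl, hw'u,
    integral_const_mul, integral_finsetSum _ fun m _ => hint_m m]
  ring

/-- Laguerre transform of the first derivative:
∫₀^∞ e^{−κt} L_n(κt) u'(t) dt = κ ∑_{m=0}^n u_m − u(0). -/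
theorem laguerre_transform_deriv (κ : ℝ) (hκ : 0 < κ) (u u' : ℝ → ℝ)
    (hderiv : ∀ t ∈ Set.Ici (0 : ℝ), HasDerivWithinAt u (u' t) (Set.Ici 0) t)
    (hcont : ContinuousOn u' (Set.Ici 0))
    (hint : ∀ k : ℕ, IntegrableOn (fun t => Real.exp (-κ * t) * t ^ k * u t) (Set.Ioi 0))
    (hint' : ∀ k : ℕ, IntegrableOn (fun t => Real.exp (-κ * t) * t ^ k * u' t) (Set.Ioi 0))
    (hlim : ∀ k : ℕ, Tendsto (fun t => Real.exp (-κ * t) * t ^ k * u t) atTop (nhds 0))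
    (n : ℕ) :
    (∫ t in Set.Ioi (0 : ℝ), Real.exp (-κ * t) * lagPoly n (κ * t) * u' t)
      = κ * (∑ m ∈ Finset.range (n + 1),
          ∫ t in Set.Ioi (0 : ℝ), Real.exp (-κ * t) * lagPoly m (κ * t) * u t) - u 0 :=
  laguerre_transform_deriv_general κ u u' hderiv hint hint' hlim n
end

section
/- Let κ, c_s, c_p > 0 and n ∈ ℕ. Then there exist ε > 0 and M > 0 such that for all 0 < r < ε, |η_{2,n}(r)| ≤ M r²; in particular η_{2,n}(r) → 0 as r → 0⁺. -/
open Real Filter MeasureTheory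

noncomputable def acoef (γ : ℝ) : ℕ → ℕ → ℝ
  | n, m =>
    if m = 0 then 1
    else if n < m then 0
    else if m = n then -(γ / (n : ℝ)) * acoef γ (n - 1) (n - 1)
    else (1 / (2 * γ * (m : ℝ))) *
      (4 * (((m + 1) / 2 : ℕ) : ℝ) ^ 2 * acoef γ n (m + 1)
        - γ ^ 2 * ∑ k ∈ (Finset.Icc (m - 1) (n - 1)).attach,
            ((n - (k : ℕ) + 1 : ℕ) : ℝ) * acoef γ (k : ℕ) (m - 1))
  termination_by n m => (n, n - m)
  decreasing_by
  · apply Prod.Lex.left; omega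
  · apply Prod.Lex.right; omega
  · apply Prod.Lex.left
    have hk := k.2
    simp only [Finset.mem_Icc] at hk
    omega

/-- χ_{k,n} -/
noncomputable def chiC (n : ℕ) (k : ℤ) : ℝ :=
  if k = -2 then (n : ℝ) * ((n : ℝ) - 1)
  else if k = -1 then -4 * (n : ℝ) ^ 2
  else if k = 0 then 2 * (3 * (n : ℝ) ^ 2 + 3 * (n : ℝ) + 1)
  else if k = 1 then -4 * ((n : ℝ) + 1) ^ 2
  else if k = 2 then ((n : ℝ) + 1) * ((n : ℝ) + 2)
  else 0

/-- the sum ∑_{k=-2}^{2} χ_{k,n} f(n+k), terms with n+k<0 omitted -/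
noncomputable def sumChi (n : ℕ) (f : ℕ → ℝ) : ℝ :=
  ∑ k ∈ Finset.Icc (-2 : ℤ) 2,
    if 0 ≤ (n : ℤ) + k then chiC n k * f ((n : ℤ) + k).toNat else 0

noncomputable def besselI0 (z : ℝ) : ℝ := ∑' k : ℕ, (z / 2) ^ (2 * k) / (k.factorial : ℝ) ^ 2

noncomputable def besselI1 (z : ℝ) : ℝ :=
  ∑' k : ℕ, (z / 2) ^ (2 * k + 1) / ((k.factorial : ℝ) * ((k + 1).factorial : ℝ))

noncomputable def psiH (k : ℕ) : ℝ := ∑ j ∈ Finset.range k, (1 : ℝ) / ((j : ℝ) + 1)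

noncomputable def besselS0 (z : ℝ) : ℝ :=
  ∑' k : ℕ, psiH k * (z / 2) ^ (2 * k) / (k.factorial : ℝ) ^ 2

noncomputable def besselS1 (z : ℝ) : ℝ :=
  -(1 / 2) * ∑' k : ℕ, (psiH (k + 1) + psiH k) * (z / 2) ^ (2 * k + 1) /
    ((k.factorial : ℝ) * ((k + 1).factorial : ℝ))

noncomputable def vPol (γ : ℝ) (n : ℕ) (r : ℝ) : ℝ :=
  ∑ m ∈ Finset.range (n / 2 + 1), acoef γ n (2 * m) * r ^ (2 * m)

noncomputable def wPol (γ : ℝ) (n : ℕ) (r : ℝ) : ℝ :=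
  ∑ m ∈ Finset.range ((n - 1) / 2 + 1), acoef γ n (2 * m + 1) * r ^ (2 * m + 1)

noncomputable def vTil (γ : ℝ) (n : ℕ) (r : ℝ) : ℝ :=
  2 * ∑ m ∈ Finset.Icc 1 (n / 2), (m : ℝ) * acoef γ n (2 * m) * r ^ (2 * m)
    - γ * ∑ m ∈ Finset.range ((n - 1) / 2 + 1), acoef γ n (2 * m + 1) * r ^ (2 * m + 2)

noncomputable def wTil (γ : ℝ) (n : ℕ) (r : ℝ) : ℝ :=
  2 * ∑ m ∈ Finset.Icc 1 ((n - 1) / 2), (m : ℝ) * acoef γ n (2 * m + 1) * r ^ (2 * m + 1)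
    - γ * ∑ m ∈ Finset.range (n / 2 + 1), acoef γ n (2 * m) * r ^ (2 * m + 1)

noncomputable def phiF (γ : ℝ) (n : ℕ) (r : ℝ) : ℝ :=
  -besselI0 (γ * r) * vPol γ n r + besselI1 (γ * r) * wPol γ n r

noncomputable def phiHat (γ : ℝ) (n : ℕ) (r : ℝ) : ℝ :=
  (-(Real.eulerMascheroniConstant + Real.log (γ / 2)) * besselI0 (γ * r) + besselS0 (γ * r)) * vPol γ n r
    + (1 / (γ * r) + (Real.eulerMascheroniConstant + Real.log (γ / 2)) * besselI1 (γ * r)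
        + besselS1 (γ * r)) * wPol γ n r

noncomputable def phiTil (γ : ℝ) (n : ℕ) (r : ℝ) : ℝ :=
  -besselI0 (γ * r) * vTil γ n r + besselI1 (γ * r) * wTil γ n r

noncomputable def phiHatTil (γ : ℝ) (n : ℕ) (r : ℝ) : ℝ :=
  (-(Real.eulerMascheroniConstant + Real.log (γ / 2)) * besselI0 (γ * r) + besselS0 (γ * r)) * vTil γ n r
    + (1 / (γ * r) + (Real.eulerMascheroniConstant + Real.log (γ / 2)) * besselI1 (γ * r)
        + besselS1 (γ * r)) * wTil γ n r

noncomputable def etaF (κ cs cp : ℝ) (ℓ n : ℕ) (r : ℝ) : ℝ :=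
  (-(ℓ : ℝ)) ^ (ℓ - 1) / (κ ^ 2 * r ^ 2) *
      sumChi n (fun j => phiF (κ / cs) j r - phiF (κ / cp) j r)
    + (-1 : ℝ) ^ (ℓ - 1) / cp ^ 2 * phiF (κ / cp) n r
    + ((ℓ : ℝ) - 1) / cs ^ 2 * phiF (κ / cs) n r

noncomputable def xiF (κ cs cp : ℝ) (ℓ n : ℕ) (r : ℝ) : ℝ :=
  (-(ℓ : ℝ)) ^ (ℓ - 1) / (κ ^ 2 * r ^ 2) *
      sumChi n (fun j => phiHat (κ / cs) j r - phiHat (κ / cp) j r)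
    + (-1 : ℝ) ^ (ℓ - 1) / cp ^ 2 * phiHat (κ / cp) n r
    + ((ℓ : ℝ) - 1) / cs ^ 2 * phiHat (κ / cs) n r

noncomputable def etaTil (κ cs cp : ℝ) (ℓ n : ℕ) (r : ℝ) : ℝ :=
  (-(ℓ : ℝ)) ^ (ℓ - 1) / (κ ^ 2 * r ^ 2) *
      sumChi n (fun j => phiTil (κ / cs) j r - 2 * phiF (κ / cs) j r
        + 2 * phiF (κ / cp) j r - phiTil (κ / cp) j r)
    + (-1 : ℝ) ^ (ℓ - 1) / cp ^ 2 * phiTil (κ / cp) n r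
    + ((ℓ : ℝ) - 1) / cs ^ 2 * phiTil (κ / cs) n r

noncomputable def xiTil (κ cs cp : ℝ) (ℓ n : ℕ) (r : ℝ) : ℝ :=
  (-(ℓ : ℝ)) ^ (ℓ - 1) / (κ ^ 2 * r ^ 2) *
      sumChi n (fun j => phiHatTil (κ / cs) j r - 2 * phiHat (κ / cs) j r
        + 2 * phiHat (κ / cp) j r - phiHatTil (κ / cp) j r)
    + (-1 : ℝ) ^ (ℓ - 1) / cp ^ 2 * phiHatTil (κ / cp) n r
    + ((ℓ : ℝ) - 1) / cs ^ 2 * phiHatTil (κ / cs) n r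

lemma acoef_zero (γ : ℝ) (n : ℕ) : acoef γ n 0 = 1 := by
  rw [acoef]; simp

lemma acoef_of_lt (γ : ℝ) {n m : ℕ} (h : n < m) : acoef γ n m = 0 := by
  rw [acoef]
  have h0 : m ≠ 0 := by omega
  simp [h0, h]

lemma acoef_diag (γ : ℝ) (n : ℕ) (h : n ≠ 0) : acoef γ n n = -(γ / n) * acoef γ (n-1) (n-1) := by
  rw [acoef]
  simp [h]

example (γ : ℝ) : acoef γ 1 1 = -γ := by
  rw [acoef_diag γ 1 (by omega)]
  simp [acoef_zero]

lemma acoef_one (γ : ℝ) (n : ℕ) (h : 2 ≤ n) :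
    acoef γ n 1 = (1/(2*γ)) * (4 * acoef γ n 2
      - γ^2 * ∑ k ∈ Finset.Icc 0 (n-1), ((n - k + 1 : ℕ) : ℝ)) := by
  rw [acoef]
  have h1 : ¬ (n < 1) := by omega
  have h2 : (1:ℕ) ≠ n := by omega
  simp only [h1, h2, if_false, if_true, Nat.one_ne_zero]
  rw [Finset.sum_attach (Finset.Icc (1-1) (n-1)) (fun k => ((n - k + 1 : ℕ) : ℝ) * acoef γ k (1-1))]
  norm_num [acoef_zero]
lemma gauss_sum (n : ℕ) (h : 1 ≤ n) :
    ∑ k ∈ Finset.Icc 0 (n-1), ((n - k + 1 : ℕ) : ℝ) = n*(n+3)/2 := by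
  have hIcc : ∀ m : ℕ, 1 ≤ m → Finset.Icc 0 (m-1) = Finset.range m := by
    intro m hm
    rw [Finset.range_eq_Ico, ← Finset.Ico_add_one_right_eq_Icc]
    congr 1; omega
  rw [hIcc n h]
  clear hIcc h
  induction n with
  | zero => simp
  | succ m ih =>
    rw [Finset.sum_range_succ]
    have : ∀ k ∈ Finset.range m, ((m + 1 - k + 1 : ℕ) : ℝ) = ((m - k + 1 : ℕ) : ℝ) + 1 := by
      intro k hk; simp at hk
      have : m + 1 - k + 1 = (m - k + 1) + 1 := by omega
      rw [this]; push_cast; ring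
    rw [Finset.sum_congr rfl this, Finset.sum_add_distrib, ih]
    simp
    ring

noncomputable def cC (γ : ℝ) (m : ℕ) : ℝ := -(γ^2/4) - acoef γ m 2 + γ/2 * acoef γ m 1

lemma cval (γ : ℝ) (hγ : γ ≠ 0) (m : ℕ) :
    cC γ m = -(γ^2/4) - γ^2 * m * (m+3) / 8 := by
  match m with
  | 0 =>
    rw [cC, acoef_of_lt γ (by omega : (0:ℕ) < 2), acoef_of_lt γ (by omega : (0:ℕ) < 1)]
    norm_num
  | 1 =>
    rw [cC, acoef_of_lt γ (by omega : (1:ℕ) < 2), acoef_diag γ 1 (by omega)]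
    simp [acoef_zero]
    ring
  | (N+2) =>
    rw [cC, acoef_one γ (N+2) (by omega), gauss_sum (N+2) (by omega)]
    push_cast
    field_simp
    ring
lemma icc_expand : Finset.Icc (-2 : ℤ) 2 = {-2, -1, 0, 1, 2} := by decide

lemma sumChi_cC (γ : ℝ) (hγ : γ ≠ 0) (n : ℕ) :
    sumChi n (fun j => cC γ j) = -(γ^2/2) := by
  have hc : ∀ j : ℕ, cC γ j = -(γ^2/4) - γ^2 * j * (j+3) / 8 := cval γ hγ
  rw [sumChi, icc_expand]
  rw [show ({-2, -1, 0, 1, 2} : Finset ℤ) = insert (-2) (insert (-1) (insert 0 (insert 1 {2}))) from rfl]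
  rw [Finset.sum_insert (by decide), Finset.sum_insert (by decide),
      Finset.sum_insert (by decide), Finset.sum_insert (by decide), Finset.sum_singleton]
  match n with
  | 0 =>
    norm_num [chiC, hc]
    rw [show ((2:ℤ).toNat) = 2 from rfl]
    norm_num; ring
  | 1 =>
    norm_num [chiC, hc]
    rw [show ((2:ℤ).toNat) = 2 from rfl, show ((3:ℤ).toNat) = 3 from rfl]
    norm_num; ring
  | (N+2) =>
    have c1 : (0:ℤ) ≤ (((N+2:ℕ)):ℤ) + -2 := by push_cast; omega
    have c2 : (0:ℤ) ≤ (((N+2:ℕ)):ℤ) + -1 := by push_cast; omega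
    have c3 : (0:ℤ) ≤ (((N+2:ℕ)):ℤ) + 0 := by push_cast; omega
    have c4 : (0:ℤ) ≤ (((N+2:ℕ)):ℤ) + 1 := by push_cast; omega
    have c5 : (0:ℤ) ≤ (((N+2:ℕ)):ℤ) + 2 := by push_cast; omega
    rw [if_pos c1, if_pos c2, if_pos c3, if_pos c4, if_pos c5]
    have t1 : ((((N+2:ℕ)):ℤ) + -2).toNat = N := by omega
    have t2 : ((((N+2:ℕ)):ℤ) + -1).toNat = N+1 := by omega
    have t3 : ((((N+2:ℕ)):ℤ) + 0).toNat = N+2 := by omega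
    have t4 : ((((N+2:ℕ)):ℤ) + 1).toNat = N+3 := by omega
    have t5 : ((((N+2:ℕ)):ℤ) + 2).toNat = N+4 := by omega
    rw [t1, t2, t3, t4, t5]
    simp only [hc, chiC]
    norm_num
    push_cast
    ring
noncomputable def auxE0 (z : ℝ) : ℝ := ∑' k : ℕ, (z/2)^(2*k) / ((k+2).factorial : ℝ)^2
noncomputable def auxE1 (z : ℝ) : ℝ := ∑' k : ℕ, (z/2)^(2*k) / (((k+1).factorial : ℝ) * ((k+2).factorial : ℝ))

lemma term_nonneg (z : ℝ) (k : ℕ) : (0:ℝ) ≤ (z/2)^(2*k) := by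
  rw [pow_mul]; positivity

lemma summable_aux (z : ℝ) (D : ℕ → ℝ) (hD : ∀ k, (k.factorial : ℝ) ≤ D k) :
    Summable (fun k => (z/2)^(2*k) / D k) := by
  have hpos : ∀ k, (0:ℝ) < D k := fun k =>
    lt_of_lt_of_le (Nat.cast_pos.mpr k.factorial_pos) (hD k)
  have hg : Summable (fun k : ℕ => ((z/2)^2)^k / (k.factorial : ℝ)) :=
    Real.summable_pow_div_factorial ((z/2)^2)
  have h1 : ∀ k : ℕ, (0:ℝ) ≤ (z/2)^(2*k) / D k := fun k =>
    div_nonneg (term_nonneg z k) (hpos k).le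
  have h2 : ∀ k : ℕ, (z/2)^(2*k) / D k ≤ ((z/2)^2)^k / (k.factorial : ℝ) := by
    intro k
    rw [← pow_mul]
    exact div_le_div_of_nonneg_left (term_nonneg z k)
      (Nat.cast_pos.mpr k.factorial_pos) (hD k)
  exact Summable.of_nonneg_of_le h1 h2 hg

lemma tsum_bound (z : ℝ) (hz : |z| ≤ 1) (D : ℕ → ℝ) (hD : ∀ k, (k.factorial : ℝ) ≤ D k) :
    |∑' k : ℕ, (z/2)^(2*k) / D k| ≤ 2 := by
  have hpos : ∀ k, (0:ℝ) < D k := fun k =>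
    lt_of_lt_of_le (Nat.cast_pos.mpr k.factorial_pos) (hD k)
  have hnn : ∀ k, (0:ℝ) ≤ (z/2)^(2*k) / D k := fun k => div_nonneg (term_nonneg z k) (hpos k).le
  rw [abs_of_nonneg (tsum_nonneg hnn)]
  have hle : ∀ k : ℕ, (z/2)^(2*k) / D k ≤ (1/4 : ℝ)^k := by
    intro k
    have h1 : (z/2)^(2*k) ≤ (1/4:ℝ)^k := by
      rw [pow_mul]
      apply pow_le_pow_left₀ (by positivity)
      nlinarith [abs_nonneg z, sq_abs z, sq_nonneg z]
    calc (z/2)^(2*k) / D k ≤ (z/2)^(2*k) / 1 :=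
          div_le_div_of_nonneg_left (term_nonneg z k) one_pos
            (le_trans (Nat.one_le_cast.mpr k.factorial_pos) (hD k))
      _ ≤ (1/4:ℝ)^k := by rw [div_one]; exact h1
  calc (∑' k : ℕ, (z/2)^(2*k) / D k) ≤ ∑' k : ℕ, (1/4:ℝ)^k := by
        exact Summable.tsum_le_tsum hle (summable_aux z D hD) (summable_geometric_of_lt_one (by norm_num) (by norm_num))
    _ = (1 - 1/4)⁻¹ := tsum_geometric_of_lt_one (by norm_num) (by norm_num)
    _ ≤ 2 := by norm_num

lemma fac_le_sq (k : ℕ) : (k.factorial : ℝ) ≤ ((k.factorial : ℝ))^2 := by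
  have h1 : (1:ℝ) ≤ (k.factorial : ℝ) := Nat.one_le_cast.mpr k.factorial_pos
  nlinarith

lemma fac_le_next (k : ℕ) : (k.factorial : ℝ) ≤ ((k+1).factorial : ℝ) :=
  Nat.cast_le.mpr (Nat.factorial_le (by omega))

lemma hD_E0 : ∀ k : ℕ, (k.factorial : ℝ) ≤ (((k+2).factorial : ℝ))^2 := fun k =>
  le_trans (le_trans (fac_le_next k) (fac_le_next (k+1))) (fac_le_sq (k+2))

lemma hD_E1 : ∀ k : ℕ, (k.factorial : ℝ) ≤ ((k+1).factorial : ℝ) * ((k+2).factorial : ℝ) := by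
  intro k
  have h1 := fac_le_next k
  have h2 : (1:ℝ) ≤ ((k+2).factorial : ℝ) := Nat.one_le_cast.mpr (k+2).factorial_pos
  have h3 : (0:ℝ) < ((k+1).factorial : ℝ) := Nat.cast_pos.mpr (k+1).factorial_pos
  nlinarith

lemma auxE0_bound (z : ℝ) (hz : |z| ≤ 1) : |auxE0 z| ≤ 2 := tsum_bound z hz _ hD_E0
lemma auxE1_bound (z : ℝ) (hz : |z| ≤ 1) : |auxE1 z| ≤ 2 := tsum_bound z hz _ hD_E1

lemma besselI0_expand (z : ℝ) : besselI0 z = 1 + z^2/4 + z^4/16 * auxE0 z := by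
  have hs1 : Summable (fun k : ℕ => (z/2)^(2*k) / ((k.factorial : ℝ))^2) := summable_aux z _ fac_le_sq
  have hD2 : ∀ k : ℕ, (k.factorial : ℝ) ≤ (((k+1).factorial : ℝ))^2 := fun k =>
    le_trans (fac_le_next k) (fac_le_sq (k+1))
  have hs2 : Summable (fun k : ℕ => (z/2)^(2*k) / (((k+1).factorial : ℝ))^2) := summable_aux z _ hD2
  have step1 : besselI0 z = 1 + (z^2/4) * ∑' k : ℕ, (z/2)^(2*k) / (((k+1).factorial : ℝ))^2 := by
    rw [besselI0, Summable.tsum_eq_zero_add hs1]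
    congr 1
    · norm_num
    · rw [← tsum_mul_left]
      apply tsum_congr
      intro k
      have he : 2*(k+1) = 2*k + 2 := by ring
      rw [he, pow_add]
      field_simp
      ring
  have step2 : (∑' k : ℕ, (z/2)^(2*k) / (((k+1).factorial : ℝ))^2)
      = 1 + (z^2/4) * auxE0 z := by
    rw [Summable.tsum_eq_zero_add hs2, auxE0]
    congr 1
    · norm_num [Nat.factorial]
    · rw [← tsum_mul_left]
      apply tsum_congr
      intro k
      have he : 2*(k+1) = 2*k + 2 := by ring
      rw [he, pow_add]
      have h12 : (k+1+1) = (k+2) := by ring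
      rw [h12]
      field_simp
      ring
  rw [step1, step2]; ring

lemma besselI1_expand (z : ℝ) : besselI1 z = z/2 + z^3/8 * auxE1 z := by
  have hD1 : ∀ k : ℕ, (k.factorial : ℝ) ≤ (k.factorial : ℝ) * ((k+1).factorial : ℝ) := by
    intro k
    have h1 : (1:ℝ) ≤ ((k+1).factorial : ℝ) := Nat.one_le_cast.mpr (k+1).factorial_pos
    have h2 : (0:ℝ) < (k.factorial : ℝ) := Nat.cast_pos.mpr k.factorial_pos
    nlinarith
  have hs1 : Summable (fun k : ℕ => (z/2)^(2*k) / ((k.factorial : ℝ) * ((k+1).factorial : ℝ))) :=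
    summable_aux z _ hD1
  have step0 : besselI1 z = (z/2) * ∑' k : ℕ, (z/2)^(2*k) / ((k.factorial : ℝ) * ((k+1).factorial : ℝ)) := by
    rw [besselI1, ← tsum_mul_left]
    apply tsum_congr
    intro k
    rw [pow_succ]
    ring
  have step2 : (∑' k : ℕ, (z/2)^(2*k) / ((k.factorial : ℝ) * ((k+1).factorial : ℝ)))
      = 1 + (z^2/4) * auxE1 z := by
    rw [Summable.tsum_eq_zero_add hs1, auxE1]
    congr 1
    · norm_num [Nat.factorial]
    · rw [← tsum_mul_left]
      apply tsum_congr
      intro k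
      have he : 2*(k+1) = 2*k + 2 := by ring
      rw [he, pow_add]
      have h12 : (k+1+1) = (k+2) := by ring
      rw [h12]
      field_simp
      ring
  rw [step0, step2]; ring
noncomputable def CtvB (γ : ℝ) (n : ℕ) : ℝ := ∑ m ∈ Finset.range n, |acoef γ n (2*m+4)|
noncomputable def CtwB (γ : ℝ) (n : ℕ) : ℝ := ∑ m ∈ Finset.range n, |acoef γ n (2*m+3)|
noncomputable def CvB (γ : ℝ) (n : ℕ) : ℝ := ∑ m ∈ Finset.range (n+2), |acoef γ n (2*m)|
noncomputable def CwB (γ : ℝ) (n : ℕ) : ℝ := ∑ m ∈ Finset.range (n+1), |acoef γ n (2*m+1)|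

lemma CtvB_nonneg (γ : ℝ) (n : ℕ) : 0 ≤ CtvB γ n := Finset.sum_nonneg fun _ _ => abs_nonneg _
lemma CtwB_nonneg (γ : ℝ) (n : ℕ) : 0 ≤ CtwB γ n := Finset.sum_nonneg fun _ _ => abs_nonneg _
lemma CvB_nonneg (γ : ℝ) (n : ℕ) : 0 ≤ CvB γ n := Finset.sum_nonneg fun _ _ => abs_nonneg _
lemma CwB_nonneg (γ : ℝ) (n : ℕ) : 0 ≤ CwB γ n := Finset.sum_nonneg fun _ _ => abs_nonneg _

lemma vPol_ext (γ : ℝ) (n : ℕ) (r : ℝ) :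
    vPol γ n r = ∑ m ∈ Finset.range (n+2), acoef γ n (2*m) * r^(2*m) := by
  rw [vPol]
  apply Finset.sum_subset
  · apply Finset.range_subset_range.mpr; omega
  · intro m hm hnm
    simp only [Finset.mem_range] at hm hnm
    rw [acoef_of_lt γ (show n < 2*m by omega)]
    ring

lemma wPol_ext (γ : ℝ) (n : ℕ) (r : ℝ) :
    wPol γ n r = ∑ m ∈ Finset.range (n+1), acoef γ n (2*m+1) * r^(2*m+1) := by
  rw [wPol]
  apply Finset.sum_subset
  · apply Finset.range_subset_range.mpr; omega
  · intro m hm hnm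
    simp only [Finset.mem_range] at hm hnm
    rw [acoef_of_lt γ (show n < 2*m+1 by omega)]
    ring

lemma vPol_abs_le (γ : ℝ) (n : ℕ) (r : ℝ) (hr : 0 ≤ r) (hr1 : r ≤ 1) :
    |vPol γ n r| ≤ CvB γ n := by
  rw [vPol_ext, CvB]
  refine (Finset.abs_sum_le_sum_abs _ _).trans ?_
  apply Finset.sum_le_sum
  intro m _
  rw [abs_mul, abs_pow, abs_of_nonneg hr]
  calc |acoef γ n (2*m)| * r^(2*m) ≤ |acoef γ n (2*m)| * 1 := by
        gcongr
        exact pow_le_one₀ hr hr1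
    _ = |acoef γ n (2*m)| := mul_one _

lemma wPol_abs_le (γ : ℝ) (n : ℕ) (r : ℝ) (hr : 0 ≤ r) (hr1 : r ≤ 1) :
    |wPol γ n r| ≤ CwB γ n * r := by
  rw [wPol_ext, CwB, Finset.sum_mul]
  refine (Finset.abs_sum_le_sum_abs _ _).trans ?_
  apply Finset.sum_le_sum
  intro m _
  rw [abs_mul, abs_pow, abs_of_nonneg hr]
  rw [pow_succ]
  have h1 : r^(2*m) ≤ 1 := pow_le_one₀ hr hr1
  calc |acoef γ n (2*m+1)| * (r^(2*m) * r) ≤ |acoef γ n (2*m+1)| * (1 * r) := by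
        gcongr
    _ = |acoef γ n (2*m+1)| * r := by ring

lemma vPol_peel (γ : ℝ) (n : ℕ) (r : ℝ) :
    vPol γ n r = 1 + acoef γ n 2 * r^2
      + ∑ m ∈ Finset.range n, acoef γ n (2*m+4) * r^(2*m+4) := by
  rw [vPol_ext, Finset.sum_range_succ', Finset.sum_range_succ']
  have h0 : acoef γ n (2*0) * r^(2*0) = 1 := by
    norm_num [acoef_zero]
  have h1 : acoef γ n (2*(0+1)) * r^(2*(0+1)) = acoef γ n 2 * r^2 := by norm_num
  rw [h0, h1]
  have : ∀ m ∈ Finset.range n,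
      acoef γ n (2*(m+1+1)) * r^(2*(m+1+1)) = acoef γ n (2*m+4) * r^(2*m+4) := by
    intro m _
    have he : 2*(m+1+1) = 2*m+4 := by ring
    rw [he]
  rw [Finset.sum_congr rfl this]
  ring

lemma wPol_peel (γ : ℝ) (n : ℕ) (r : ℝ) :
    wPol γ n r = acoef γ n 1 * r
      + ∑ m ∈ Finset.range n, acoef γ n (2*m+3) * r^(2*m+3) := by
  rw [wPol_ext, Finset.sum_range_succ']
  have h0 : acoef γ n (2*0+1) * r^(2*0+1) = acoef γ n 1 * r := by norm_num
  rw [h0]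
  have : ∀ m ∈ Finset.range n,
      acoef γ n (2*(m+1)+1) * r^(2*(m+1)+1) = acoef γ n (2*m+3) * r^(2*m+3) := by
    intro m _
    have he : 2*(m+1)+1 = 2*m+3 := by ring
    rw [he]
  rw [Finset.sum_congr rfl this]
  ring

lemma vPol_tail (γ : ℝ) (n : ℕ) (r : ℝ) (hr : 0 ≤ r) (hr1 : r ≤ 1) :
    |vPol γ n r - 1 - acoef γ n 2 * r^2| ≤ CtvB γ n * r^4 := by
  have h := vPol_peel γ n r
  have heq : vPol γ n r - 1 - acoef γ n 2 * r^2
      = ∑ m ∈ Finset.range n, acoef γ n (2*m+4) * r^(2*m+4) := by rw [h]; ring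
  rw [heq, CtvB, Finset.sum_mul]
  refine (Finset.abs_sum_le_sum_abs _ _).trans ?_
  apply Finset.sum_le_sum
  intro m _
  rw [abs_mul, abs_pow, abs_of_nonneg hr]
  rw [pow_add]
  have h1 : r^(2*m) ≤ 1 := pow_le_one₀ hr hr1
  calc |acoef γ n (2*m+4)| * (r^(2*m) * r^4) ≤ |acoef γ n (2*m+4)| * (1 * r^4) := by
        gcongr
    _ = |acoef γ n (2*m+4)| * r^4 := by ring

lemma wPol_tail (γ : ℝ) (n : ℕ) (r : ℝ) (hr : 0 ≤ r) (hr1 : r ≤ 1) :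
    |wPol γ n r - acoef γ n 1 * r| ≤ CtwB γ n * r^3 := by
  have h := wPol_peel γ n r
  have heq : wPol γ n r - acoef γ n 1 * r
      = ∑ m ∈ Finset.range n, acoef γ n (2*m+3) * r^(2*m+3) := by rw [h]; ring
  rw [heq, CtwB, Finset.sum_mul]
  refine (Finset.abs_sum_le_sum_abs _ _).trans ?_
  apply Finset.sum_le_sum
  intro m _
  rw [abs_mul, abs_pow, abs_of_nonneg hr]
  rw [pow_add]
  have h1 : r^(2*m) ≤ 1 := pow_le_one₀ hr hr1
  calc |acoef γ n (2*m+3)| * (r^(2*m) * r^3) ≤ |acoef γ n (2*m+3)| * (1 * r^3) := by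
        gcongr
    _ = |acoef γ n (2*m+3)| * r^3 := by ring
lemma abs5 (a b c d e : ℝ) : |a + b + c + d + e| ≤ |a| + |b| + |c| + |d| + |e| := by
  have h1 := abs_add_le (a+b+c+d) e
  have h2 := abs_add_le (a+b+c) d
  have h3 := abs_add_le (a+b) c
  have h4 := abs_add_le a b
  linarith

lemma phi_expand (γ : ℝ) (hγ : 0 < γ) (n : ℕ) :
    ∃ M : ℝ, 0 ≤ M ∧ ∀ r : ℝ, 0 < r → r ≤ 1 → γ * r ≤ 1 →
      |phiF γ n r - (-1 + cC γ n * r^2)| ≤ M * r^4 := by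
  refine ⟨|acoef γ n 2| * γ^2/4 + (1 + γ^2/4) * CtvB γ n + γ/2 * CtwB γ n
      + γ^4/16 * 2 * CvB γ n + γ^3/8 * 2 * CwB γ n, ?_, ?_⟩
  · have := CtvB_nonneg γ n
    have := CtwB_nonneg γ n
    have := CvB_nonneg γ n
    have := CwB_nonneg γ n
    positivity
  intro r hr hr1 hγr
  have hz : |γ * r| ≤ 1 := by
    rw [abs_of_pos (by positivity)]; exact hγr
  have hE0 : |auxE0 (γ*r)| ≤ 2 := auxE0_bound _ hz
  have hE1 : |auxE1 (γ*r)| ≤ 2 := auxE1_bound _ hz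
  have hTv : |vPol γ n r - 1 - acoef γ n 2 * r^2| ≤ CtvB γ n * r^4 := vPol_tail γ n r hr.le hr1
  have hTw : |wPol γ n r - acoef γ n 1 * r| ≤ CtwB γ n * r^3 := wPol_tail γ n r hr.le hr1
  have hv : |vPol γ n r| ≤ CvB γ n := vPol_abs_le γ n r hr.le hr1
  have hw : |wPol γ n r| ≤ CwB γ n * r := wPol_abs_le γ n r hr.le hr1
  have key : phiF γ n r - (-1 + cC γ n * r^2)
      = -(acoef γ n 2 * γ^2 * r^4/4)
        + (-(1 + γ^2*r^2/4) * (vPol γ n r - 1 - acoef γ n 2 * r^2))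
        + (γ*r/2) * (wPol γ n r - acoef γ n 1 * r)
        + (-(γ^4*r^4/16) * auxE0 (γ*r) * vPol γ n r)
        + (γ^3*r^3/8) * auxE1 (γ*r) * wPol γ n r := by
    rw [phiF, besselI0_expand, besselI1_expand, cC]
    ring
  rw [key]
  refine (abs5 _ _ _ _ _).trans ?_
  have hb1 : |(-(acoef γ n 2 * γ^2 * r^4/4))| = |acoef γ n 2| * γ^2/4 * r^4 := by
    rw [abs_neg, abs_div, abs_mul, abs_mul]
    rw [abs_of_nonneg (by positivity : (0:ℝ) ≤ γ^2),
        abs_of_nonneg (by positivity : (0:ℝ) ≤ r^4),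
        abs_of_pos (show (0:ℝ) < 4 by norm_num)]
    ring
  have hb2 : |(-(1 + γ^2*r^2/4) * (vPol γ n r - 1 - acoef γ n 2 * r^2))|
      ≤ (1 + γ^2/4) * CtvB γ n * r^4 := by
    rw [abs_mul, abs_neg, abs_of_pos (by positivity : (0:ℝ) < 1 + γ^2*r^2/4)]
    calc (1 + γ^2*r^2/4) * |vPol γ n r - 1 - acoef γ n 2 * r^2|
        ≤ (1 + γ^2/4) * (CtvB γ n * r^4) := by
          apply mul_le_mul _ hTv (abs_nonneg _) (by positivity)
          have h1 : r^2 ≤ 1 := pow_le_one₀ hr.le hr1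
          nlinarith [sq_nonneg γ]
      _ = (1 + γ^2/4) * CtvB γ n * r^4 := by ring
  have hb3 : |(γ*r/2) * (wPol γ n r - acoef γ n 1 * r)| ≤ γ/2 * CtwB γ n * r^4 := by
    rw [abs_mul, abs_of_pos (by positivity : (0:ℝ) < γ*r/2)]
    calc (γ*r/2) * |wPol γ n r - acoef γ n 1 * r|
        ≤ (γ*r/2) * (CtwB γ n * r^3) := by gcongr
      _ = γ/2 * CtwB γ n * r^4 := by ring
  have hb4 : |(-(γ^4*r^4/16) * auxE0 (γ*r) * vPol γ n r)| ≤ γ^4/16 * 2 * CvB γ n * r^4 := by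
    rw [abs_mul, abs_mul, abs_neg, abs_of_pos (by positivity : (0:ℝ) < γ^4*r^4/16)]
    calc γ^4*r^4/16 * |auxE0 (γ*r)| * |vPol γ n r|
        ≤ γ^4*r^4/16 * 2 * CvB γ n := by
          gcongr
      _ = γ^4/16 * 2 * CvB γ n * r^4 := by ring
  have hb5 : |(γ^3*r^3/8) * auxE1 (γ*r) * wPol γ n r| ≤ γ^3/8 * 2 * CwB γ n * r^4 := by
    rw [abs_mul, abs_mul, abs_of_pos (by positivity : (0:ℝ) < γ^3*r^3/8)]
    calc γ^3*r^3/8 * |auxE1 (γ*r)| * |wPol γ n r|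
        ≤ γ^3*r^3/8 * 2 * (CwB γ n * r) := by
          gcongr
      _ = γ^3/8 * 2 * CwB γ n * r^4 := by ring
  have hM : (|acoef γ n 2| * γ^2/4 + (1 + γ^2/4) * CtvB γ n + γ/2 * CtwB γ n
      + γ^4/16 * 2 * CvB γ n + γ^3/8 * 2 * CwB γ n) * r^4
      = |acoef γ n 2| * γ^2/4 * r^4 + (1 + γ^2/4) * CtvB γ n * r^4 + γ/2 * CtwB γ n * r^4
      + γ^4/16 * 2 * CvB γ n * r^4 + γ^3/8 * 2 * CwB γ n * r^4 := by ring
  rw [hM]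
  linarith [hb1.le]
lemma sumChi_congr (n : ℕ) (f g : ℕ → ℝ) (h : ∀ j, f j = g j) : sumChi n f = sumChi n g := by
  rw [sumChi, sumChi]
  apply Finset.sum_congr rfl
  intro k _
  rw [h]

lemma sumChi_add (n : ℕ) (f g : ℕ → ℝ) :
    sumChi n (fun j => f j + g j) = sumChi n f + sumChi n g := by
  rw [sumChi, sumChi, sumChi, ← Finset.sum_add_distrib]
  apply Finset.sum_congr rfl
  intro k _
  split_ifs <;> ring

lemma sumChi_sub (n : ℕ) (f g : ℕ → ℝ) :
    sumChi n (fun j => f j - g j) = sumChi n f - sumChi n g := by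
  rw [sumChi, sumChi, sumChi, ← Finset.sum_sub_distrib]
  apply Finset.sum_congr rfl
  intro k _
  split_ifs <;> ring

lemma sumChi_mul_right (n : ℕ) (f : ℕ → ℝ) (c : ℝ) :
    sumChi n (fun j => f j * c) = sumChi n f * c := by
  rw [sumChi, sumChi, Finset.sum_mul]
  apply Finset.sum_congr rfl
  intro k _
  split_ifs <;> ring

noncomputable def ChiB (n : ℕ) : ℝ := ∑ k ∈ Finset.Icc (-2:ℤ) 2, |chiC n k|

lemma ChiB_nonneg (n : ℕ) : 0 ≤ ChiB n := Finset.sum_nonneg fun _ _ => abs_nonneg _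

lemma sumChi_abs_le (n : ℕ) (f : ℕ → ℝ) (B : ℝ) (hB : 0 ≤ B)
    (h : ∀ j ≤ n+2, |f j| ≤ B) : |sumChi n f| ≤ ChiB n * B := by
  rw [sumChi, ChiB, Finset.sum_mul]
  refine (Finset.abs_sum_le_sum_abs _ _).trans ?_
  apply Finset.sum_le_sum
  intro k hk
  rw [Finset.mem_Icc] at hk
  split_ifs with hc
  · rw [abs_mul]
    apply mul_le_mul_of_nonneg_left _ (abs_nonneg _)
    apply h
    omega
  · rw [abs_zero]
    exact mul_nonneg (abs_nonneg _) hB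
set_option maxHeartbeats 1600000 in
/-- η_{2,n}(r) = O(r²) as r → 0⁺. -/
theorem eta_two_asymptotics (κ cs cp : ℝ) (hκ : 0 < κ) (hcs : 0 < cs) (hcp : 0 < cp) (n : ℕ) :
    (∃ ε > (0 : ℝ), ∃ M > (0 : ℝ), ∀ r : ℝ, 0 < r → r < ε →
      |etaF κ cs cp 2 n r| ≤ M * r ^ 2) ∧
    Tendsto (fun r => etaF κ cs cp 2 n r) (nhdsWithin 0 (Set.Ioi 0)) (nhds 0) := by
  have hγs : 0 < κ/cs := div_pos hκ hcs
  have hγp : 0 < κ/cp := div_pos hκ hcp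
  choose Ms hMs0 hMs using fun j => phi_expand (κ/cs) hγs j
  choose Mp hMp0 hMp using fun j => phi_expand (κ/cp) hγp j
  set MS : ℝ := ∑ j ∈ Finset.range (n+3), Ms j with hMSdef
  set MP : ℝ := ∑ j ∈ Finset.range (n+3), Mp j with hMPdef
  have hMSn : 0 ≤ MS := Finset.sum_nonneg fun j _ => hMs0 j
  have hMPn : 0 ≤ MP := Finset.sum_nonneg fun j _ => hMp0 j
  have hMSle : ∀ j ≤ n+2, Ms j ≤ MS := fun j hj =>
    Finset.single_le_sum (fun i _ => hMs0 i) (Finset.mem_range.mpr (by omega))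
  have hMPle : ∀ j ≤ n+2, Mp j ≤ MP := fun j hj =>
    Finset.single_le_sum (fun i _ => hMp0 i) (Finset.mem_range.mpr (by omega))
  set ε : ℝ := min 1 (min (cs/κ) (cp/κ)) with hεdef
  have hε : 0 < ε := by
    apply lt_min one_pos
    exact lt_min (div_pos hcs hκ) (div_pos hcp hκ)
  set M : ℝ := 2*(ChiB n)*(MS+MP)/κ^2 + (|cC (κ/cs) n|/cs^2 + |cC (κ/cp) n|/cp^2)
      + (MS/cs^2 + MP/cp^2) + 1 with hMdef
  have hM : 0 < M := by
    have h1 := ChiB_nonneg n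
    have h2 := abs_nonneg (cC (κ/cs) n)
    have h3 := abs_nonneg (cC (κ/cp) n)
    positivity
  have hbound : ∀ r : ℝ, 0 < r → r < ε → |etaF κ cs cp 2 n r| ≤ M * r ^ 2 := by
    intro r hr hrε
    have hr1 : r ≤ 1 := le_of_lt (lt_of_lt_of_le hrε (min_le_left _ _))
    have hrs : r < cs/κ := lt_of_lt_of_le hrε (le_trans (min_le_right _ _) (min_le_left _ _))
    have hrp : r < cp/κ := lt_of_lt_of_le hrε (le_trans (min_le_right _ _) (min_le_right _ _))
    have hγsr : (κ/cs)*r ≤ 1 := by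
      rw [div_mul_eq_mul_div, div_le_one hcs]
      calc κ * r ≤ κ * (cs/κ) := by gcongr
        _ = cs := by field_simp
    have hγpr : (κ/cp)*r ≤ 1 := by
      rw [div_mul_eq_mul_div, div_le_one hcp]
      calc κ * r ≤ κ * (cp/κ) := by gcongr
        _ = cp := by field_simp
    set Es : ℕ → ℝ := fun j => phiF (κ/cs) j r - (-1 + cC (κ/cs) j * r^2) with hEsdef
    set Ep : ℕ → ℝ := fun j => phiF (κ/cp) j r - (-1 + cC (κ/cp) j * r^2) with hEpdef
    have hEs : ∀ j ≤ n+2, |Es j| ≤ MS * r^4 := by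
      intro j hj
      exact (hMs j r hr hr1 hγsr).trans
        (mul_le_mul_of_nonneg_right (hMSle j hj) (by positivity))
    have hEp : ∀ j ≤ n+2, |Ep j| ≤ MP * r^4 := by
      intro j hj
      exact (hMp j r hr hr1 hγpr).trans
        (mul_le_mul_of_nonneg_right (hMPle j hj) (by positivity))
    -- decompose the sumChi term
    have hstep : sumChi n (fun j => phiF (κ/cs) j r - phiF (κ/cp) j r)
        = (-((κ/cs)^2/2) + ((κ/cp)^2/2)) * r^2 + sumChi n (fun j => Es j - Ep j) := by
      have hpt : ∀ j, phiF (κ/cs) j r - phiF (κ/cp) j r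
          = (cC (κ/cs) j - cC (κ/cp) j) * r^2 + (Es j - Ep j) := by
        intro j
        rw [hEsdef, hEpdef]
        ring
      rw [sumChi_congr n _ _ hpt, sumChi_add, sumChi_mul_right, sumChi_sub,
        sumChi_cC (κ/cs) (ne_of_gt hγs) n, sumChi_cC (κ/cp) (ne_of_gt hγp) n]
      ring
    set Sd : ℝ := sumChi n (fun j => Es j - Ep j) with hSddef
    have hSd : |Sd| ≤ ChiB n * ((MS + MP) * r^4) := by
      apply sumChi_abs_le
      · positivity
      · intro j hj
        calc |Es j - Ep j| ≤ |Es j| + |Ep j| := abs_sub _ _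
          _ ≤ MS * r^4 + MP * r^4 := add_le_add (hEs j hj) (hEp j hj)
          _ = (MS + MP) * r^4 := by ring
    have hφsn : phiF (κ/cs) n r = -1 + cC (κ/cs) n * r^2 + Es n := by
      rw [hEsdef]; ring
    have hφpn : phiF (κ/cp) n r = -1 + cC (κ/cp) n * r^2 + Ep n := by
      rw [hEpdef]; ring
    have hEta : etaF κ cs cp 2 n r
        = -2/(κ^2*r^2) * Sd
          + (cC (κ/cs) n/cs^2 - cC (κ/cp) n/cp^2) * r^2 + (Es n/cs^2 - Ep n/cp^2) := by
      rw [etaF, hstep, hφsn, hφpn, hSddef]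
      norm_num
      field_simp
      ring
    rw [hEta]
    have t1 : |(-2/(κ^2*r^2)) * Sd| ≤ (2*(ChiB n)*(MS+MP)/κ^2) * r^2 := by
      rw [abs_mul]
      have h1 : |(-2/(κ^2*r^2))| = 2/(κ^2*r^2) := by
        rw [abs_div, abs_neg]
        norm_num [abs_of_pos (show (0:ℝ) < κ^2*r^2 by positivity)]
      rw [h1]
      calc 2/(κ^2*r^2) * |Sd| ≤ 2/(κ^2*r^2) * (ChiB n * ((MS+MP) * r^4)) := by
            gcongr
        _ = (2*(ChiB n)*(MS+MP)/κ^2) * r^2 := by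
            field_simp
    have t2 : |(cC (κ/cs) n/cs^2 - cC (κ/cp) n/cp^2) * r^2|
        ≤ (|cC (κ/cs) n|/cs^2 + |cC (κ/cp) n|/cp^2) * r^2 := by
      rw [abs_mul, abs_of_nonneg (by positivity : (0:ℝ) ≤ r^2)]
      apply mul_le_mul_of_nonneg_right _ (by positivity)
      calc |cC (κ/cs) n/cs^2 - cC (κ/cp) n/cp^2|
          ≤ |cC (κ/cs) n/cs^2| + |cC (κ/cp) n/cp^2| := abs_sub _ _
        _ = |cC (κ/cs) n|/cs^2 + |cC (κ/cp) n|/cp^2 := by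
            rw [abs_div, abs_div, abs_of_nonneg (by positivity : (0:ℝ) ≤ cs^2),
              abs_of_nonneg (by positivity : (0:ℝ) ≤ cp^2)]
    have t3 : |Es n/cs^2 - Ep n/cp^2| ≤ (MS/cs^2 + MP/cp^2) * r^2 := by
      have h4 : r^4 ≤ r^2 := pow_le_pow_of_le_one hr.le hr1 (by omega)
      calc |Es n/cs^2 - Ep n/cp^2| ≤ |Es n/cs^2| + |Ep n/cp^2| := abs_sub _ _
        _ = |Es n|/cs^2 + |Ep n|/cp^2 := by
            rw [abs_div, abs_div, abs_of_nonneg (by positivity : (0:ℝ) ≤ cs^2),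
              abs_of_nonneg (by positivity : (0:ℝ) ≤ cp^2)]
        _ ≤ (MS * r^4)/cs^2 + (MP * r^4)/cp^2 := by
            gcongr
            · exact hEs n (by omega)
            · exact hEp n (by omega)
        _ ≤ (MS * r^2)/cs^2 + (MP * r^2)/cp^2 := by gcongr
        _ = (MS/cs^2 + MP/cp^2) * r^2 := by ring
    have habs := abs_add_three ((-2/(κ^2*r^2)) * Sd)
      ((cC (κ/cs) n/cs^2 - cC (κ/cp) n/cp^2) * r^2) (Es n/cs^2 - Ep n/cp^2)
    have hMr : M * r^2 = (2*(ChiB n)*(MS+MP)/κ^2) * r^2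
        + (|cC (κ/cs) n|/cs^2 + |cC (κ/cp) n|/cp^2) * r^2
        + (MS/cs^2 + MP/cp^2) * r^2 + r^2 := by rw [hMdef]; ring
    rw [hMr]
    have hr2 : 0 ≤ r^2 := by positivity
    linarith
  refine ⟨⟨ε, hε, M, hM, hbound⟩, ?_⟩
  apply squeeze_zero_norm' (a := fun r => M * r^2)
  · filter_upwards [Ioo_mem_nhdsGT_of_mem (by constructor <;> [rfl; exact hε] : (0:ℝ) ∈ Set.Ico 0 ε)] with r hr
    exact hbound r hr.1 hr.2
  · have : Tendsto (fun r : ℝ => M * r^2) (nhds 0) (nhds (M * 0^2)) :=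
      (continuous_const.mul (continuous_pow 2)).tendsto 0
    simpa using this.mono_left nhdsWithin_le_nhds
end
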